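/- Let Ω ⊆ ℝ^{n×p} be open and convex, τ ∈ ℝ, and let f : ℝ^{n×p} → ℝ be τ-weakly convex on Ω, i.e., Z ↦ f(Z) + (τ/2)‖Z‖² is convex on Ω. Fix X ∈ Ω and C ⊆ [p], define the affine map Φ(Y_C) = Y_C (I_C)ᵀ + X_{[p]∖C}(I_{[p]∖C})ᵀ (so Φ(X_C) = X), Ω_C = {Y_C ∈ ℝ^{n×|C|} : Φ(Y_C) ∈ Ω}, and the partial subdifferential ∂^C f(X) = {u ∈ ℝ^{n×|C|} : f(Φ(Y_C)) ≥ f(X) + ⟨u, Y_C − X_C⟩ − (τ/2)‖Y_C − X_C‖² for all Y_C ∈ Ω_C}, and the subdifferential ∂f(X) = {v ∈ ℝ^{n×p} : f(Y) ≥ f(X) + ⟨v, Y−X⟩ − (τ/2)‖Y−X‖² for all Y ∈ Ω}. Then ∂^C f(X) = {v·I_C : v ∈ ∂f(X)}; in particular, for every u ∈ ∂^C f(X) there exists v ∈ ∂f(X) with u = v·I_C. -/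

import Mathlib

/-!
Common definitions for the formalization of results from
"Nonsmooth Optimization over the Stiefel Manifold via a Randomized
Submanifold Subgradient Method" (RSSM).
-/

open Matrix Finset

noncomputable section

namespace RSSM

variable {n p ℓ : ℕ}

/-- Real `n × p` matrices. -/
abbrev Mat (n p : ℕ) := Matrix (Fin n) (Fin p) ℝ

/-- Frobenius inner product `⟨ξ,η⟩ = tr(ξᵀ η)`. -/
def fip (ξ η : Mat n p) : ℝ := (ξᵀ * η).trace

/-- Frobenius norm. -/
def fnorm (ξ : Mat n p) : ℝ := Real.sqrt (fip ξ ξ)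

/-- The Stiefel manifold `St(n,p)`. -/
def Stiefel (n p : ℕ) : Set (Mat n p) := {X | Xᵀ * X = 1}

/-- Column-selection matrix `I_C`. -/
def sel (C : Finset (Fin p)) : Matrix (Fin p) (Fin C.card) ℝ :=
  Matrix.of fun s t => if s = C.orderEmbOfFin rfl t then (1 : ℝ) else 0

/-- Skew-symmetric part. -/
def skewPart {m : ℕ} (A : Matrix (Fin m) (Fin m) ℝ) : Matrix (Fin m) (Fin m) ℝ :=
  (1 / 2 : ℝ) • (A - Aᵀ)

/-- Symmetric part. -/
def symPart {m : ℕ} (A : Matrix (Fin m) (Fin m) ℝ) : Matrix (Fin m) (Fin m) ℝ :=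
  (1 / 2 : ℝ) • (A + Aᵀ)

open Classical in
/-- Inverse of the positive-semidefinite square root (junk value `0` otherwise). -/
def invSqrt {m : ℕ} (S : Matrix (Fin m) (Fin m) ℝ) : Matrix (Fin m) (Fin m) ℝ :=
  if h : S.PosSemidef then
    (h.1.eigenvectorUnitary.1 * Matrix.diagonal (Real.sqrt ∘ h.1.eigenvalues)
      * (star h.1.eigenvectorUnitary : Matrix (Fin m) (Fin m) ℝ))⁻¹ else 0

/-- Orthogonal projection onto the tangent space `T_X St(n,p)`. -/
def ptan (X ξ : Mat n p) : Mat n p := ξ - X * symPart (Xᵀ * ξ)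

/-- Orthogonal projection `Π` onto the tangent space of the submanifold block at `X_D`. -/
def pblk (X : Mat n p) (D : Finset (Fin p)) (η : Matrix (Fin n) (Fin D.card) ℝ) :
    Matrix (Fin n) (Fin D.card) ℝ :=
  (X * sel D) * skewPart ((X * sel D)ᵀ * η) + (1 - X * Xᵀ) * η

/-- The averaging operator `A_X` (written as an average over ordered pairs of
distinct indices, which equals the average over unordered pairs since each
unordered pair is counted twice). -/
def avg (C : Fin ℓ → Finset (Fin p)) (X ξ : Mat n p) : Mat n p :=
  ((ℓ : ℝ) * ((ℓ : ℝ) - 1))⁻¹ •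
    ∑ q ∈ Finset.univ.offDiag,
      ((1 : Matrix (Fin n) (Fin n) ℝ)
          - (X * sel ((C q.1 ∪ C q.2)ᶜ)) * (X * sel ((C q.1 ∪ C q.2)ᶜ))ᵀ)
        * (ξ * sel (C q.1 ∪ C q.2)) * (sel (C q.1 ∪ C q.2))ᵀ

/-- The averaging operator `A_X` as a linear endomorphism. -/
def avgL (C : Fin ℓ → Finset (Fin p)) (X : Mat n p) : Mat n p →ₗ[ℝ] Mat n p where
  toFun := avg C X
  map_add' := by
    intro ξ η
    simp [avg, Matrix.add_mul, Matrix.mul_add, Finset.sum_add_distrib, smul_add]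
  map_smul' := by
    intro c ξ
    simp only [avg, RingHom.id_apply, Matrix.smul_mul, Matrix.mul_smul, ← Finset.smul_sum]
    rw [smul_comm]

/-- `C(ℓ,2) = ℓ(ℓ-1)/2`. -/
def choose2 (ℓ : ℕ) : ℝ := (ℓ : ℝ) * ((ℓ : ℝ) - 1) / 2

/-- Block Hadamard product `A ⊡ M` with respect to the partition `C`. -/
def bhad (C : Fin ℓ → Finset (Fin p)) (A : Matrix (Fin ℓ) (Fin ℓ) ℝ)
    (M : Matrix (Fin p) (Fin p) ℝ) : Matrix (Fin p) (Fin p) ℝ :=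
  Matrix.of fun s t => (∑ i, ∑ j, if s ∈ C i ∧ t ∈ C j then A i j else 0) * M s t

/-- `Q' = J - ((ℓ-2)/(ℓ-1)) I`. -/
def Qmat (ℓ : ℕ) : Matrix (Fin ℓ) (Fin ℓ) ℝ :=
  Matrix.of fun i j => 1 - (if i = j then ((ℓ : ℝ) - 2) / ((ℓ : ℝ) - 1) else 0)

/-- The all-ones `ℓ × ℓ` matrix `J`. -/
def Jmat (ℓ : ℕ) : Matrix (Fin ℓ) (Fin ℓ) ℝ := Matrix.of fun _ _ => 1

/-- The operator `B_Z` (the inverse of the averaging operator `A_Z`). -/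
def Bop (C : Fin ℓ → Finset (Fin p)) (Z ξ : Mat n p) : Mat n p :=
  Z * (choose2 ℓ • bhad C (Qmat ℓ) (Zᵀ * ξ)) + ((ℓ : ℝ) / 2) • ((1 - Z * Zᵀ) * ξ)

/-- `‖ξ‖²_{A_Z^{-1}} = ⟨B_Z(ξ), ξ⟩`. -/
def anorm2 (C : Fin ℓ → Finset (Fin p)) (Z ξ : Mat n p) : ℝ := fip (Bop C Z ξ) ξ

/-- The RSSM update `U(X, v, γ, {i,j})`: it agrees with `X` on all columns outside
`C_i ∪ C_j` and performs a retracted partial Riemannian subgradient step there. -/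
def update (C : Fin ℓ → Finset (Fin p)) (X v : Mat n p) (γ : ℝ) (i j : Fin ℓ) : Mat n p :=
  X - (X * sel (C i ∪ C j)) * (sel (C i ∪ C j))ᵀ
    + ((X * sel (C i ∪ C j) - γ • pblk X (C i ∪ C j) (v * sel (C i ∪ C j)))
        * invSqrt ((X * sel (C i ∪ C j) - γ • pblk X (C i ∪ C j) (v * sel (C i ∪ C j)))ᵀ
            * (X * sel (C i ∪ C j) - γ • pblk X (C i ∪ C j) (v * sel (C i ∪ C j)))))
      * (sel (C i ∪ C j))ᵀ

/-- The subdifferential of a `τ`-weakly convex function relative to `Ω`. -/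
def subdiff (Ω : Set (Mat n p)) (τ : ℝ) (f : Mat n p → ℝ) (X : Mat n p) :
    Set (Mat n p) :=
  {v | ∀ Y ∈ Ω, f Y ≥ f X + fip v (Y - X) - τ / 2 * (fnorm (Y - X)) ^ 2}

/-- `C` is a partition of `[p]` into nonempty blocks. -/
def IsPartition (C : Fin ℓ → Finset (Fin p)) : Prop :=
  (∀ i, (C i).Nonempty) ∧ (∀ i j, i ≠ j → Disjoint (C i) (C j)) ∧ (∀ s, ∃ i, s ∈ C i)

/-- The weakly convex Lipschitz setting. -/
structure Setting (n p : ℕ) (f : Mat n p → ℝ) (τ L : ℝ) (Ω : Set (Mat n p)) : Prop where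
  tau_nonneg : 0 ≤ τ
  L_pos : 0 < L
  isOpen : IsOpen Ω
  bounded : ∃ R : ℝ, ∀ Y ∈ Ω, fnorm Y ≤ R
  convex : Convex ℝ Ω
  stiefel_subset : Stiefel n p ⊆ Ω
  lipschitz : ∀ X ∈ Ω, ∀ Y ∈ Ω, |f X - f Y| ≤ L * fnorm (X - Y)
  weaklyConvex : ConvexOn ℝ Ω (fun Z => f Z + τ / 2 * (fnorm Z) ^ 2)

/-- The adaptive proximal objective `Y ↦ f(Y) + (1/(2λ))‖Y-X‖²_{A_X^{-1}}`. -/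
def pobj (C : Fin ℓ → Finset (Fin p)) (f : Mat n p → ℝ) (lam : ℝ) (X Y : Mat n p) : ℝ :=
  f Y + 1 / (2 * lam) * anorm2 C X (Y - X)

/-- The adaptive Moreau envelope `f_λ`. -/
def moreau (C : Fin ℓ → Finset (Fin p)) (f : Mat n p → ℝ) (lam : ℝ) (X : Mat n p) : ℝ :=
  sInf ((fun Y => pobj C f lam X Y) '' Stiefel n p)

open Classical in
/-- The adaptive proximal point `Z_X` (defined via choice; under the standing
hypotheses the minimizer over the Stiefel manifold exists and is unique). -/
def proxPt (C : Fin ℓ → Finset (Fin p)) (f : Mat n p → ℝ) (lam : ℝ) (X : Mat n p) :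
    Mat n p :=
  if h : ∃ Z ∈ Stiefel n p, ∀ Y ∈ Stiefel n p, pobj C f lam X Z ≤ pobj C f lam X Y
  then h.choose else X

/-- The surrogate stationarity measure `Θ_λ(X) = (1/λ)‖Z_X - X‖_{A_X^{-1}}`. -/
def Theta (C : Fin ℓ → Finset (Fin p)) (f : Mat n p → ℝ) (lam : ℝ) (X : Mat n p) : ℝ :=
  1 / lam * Real.sqrt (anorm2 C X (proxPt C f lam X - X))

/-- The type of unordered pairs of distinct indices in `[ℓ]`. -/
def PairT (ℓ : ℕ) := {s : Sym2 (Fin ℓ) // ¬ s.IsDiag}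

instance : Fintype (PairT ℓ) := by unfold PairT; infer_instance
instance : DecidableEq (PairT ℓ) := by unfold PairT; infer_instance
instance : MeasurableSpace (PairT ℓ) := ⊤

/-- The RSSM update as a function of an unordered pair of indices. -/
def updateS (C : Fin ℓ → Finset (Fin p)) (X v : Mat n p) (γ : ℝ) (s : Sym2 (Fin ℓ)) :
    Mat n p :=
  Sym2.lift ⟨fun i j => update C X v γ i j, by
    intro i j
    show update C X v γ i j = update C X v γ j i
    unfold update pblk
    rw [Finset.union_comm (C i) (C j)]⟩ s

/-- The RSSM iterates driven by a sequence `ω` of unordered pairs. -/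
def seqIter (C : Fin ℓ → Finset (Fin p)) (V : Mat n p → Mat n p) (X0 : Mat n p)
    (γ : ℕ → ℝ) (ω : ℕ → PairT ℓ) : ℕ → Mat n p
  | 0 => X0
  | k + 1 => updateS C (seqIter C V X0 γ ω k) (V (seqIter C V X0 γ ω k)) (γ k) (ω k).1

/-- The RSSM iterate after `k` steps driven by a finite prefix of unordered pairs. -/
def preIter (C : Fin ℓ → Finset (Fin p)) (V : Mat n p → Mat n p) (X0 : Mat n p)
    (γ : ℕ → ℝ) : (k : ℕ) → (Fin k → PairT ℓ) → Mat n p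
  | 0, _ => X0
  | k + 1, g =>
      updateS C (preIter C V X0 γ k (fun m => g m.castSucc))
        (V (preIter C V X0 γ k (fun m => g m.castSucc))) (γ k) (g (Fin.last k)).1

/-- `E[h(X^k)]`, the average over all prefixes of unordered pairs of length `k`. -/
def Eavg (C : Fin ℓ → Finset (Fin p)) (V : Mat n p → Mat n p) (X0 : Mat n p)
    (γ : ℕ → ℝ) (k : ℕ) (h : Mat n p → ℝ) : ℝ :=
  (1 / (Fintype.card (PairT ℓ) : ℝ)) ^ k * ∑ g : Fin k → PairT ℓ, h (preIter C V X0 γ k g)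

open Pointwise

lemma fip_eq_sum (ξ η : Mat n p) : fip ξ η = ∑ i, ∑ j, ξ i j * η i j := by
  simp [fip, Matrix.trace, Matrix.diag, Matrix.mul_apply, Matrix.transpose_apply]
  rw [Finset.sum_comm]

lemma fip_comm (ξ η : Mat n p) : fip ξ η = fip η ξ := by
  simp [fip_eq_sum, mul_comm]

lemma fip_add_right (ξ η θ : Mat n p) : fip ξ (η + θ) = fip ξ η + fip ξ θ := by
  simp [fip, Matrix.mul_add]

lemma fip_add_left (ξ η θ : Mat n p) : fip (ξ + η) θ = fip ξ θ + fip η θ := by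
  simp [fip, Matrix.add_mul]

lemma fip_sub_right (ξ η θ : Mat n p) : fip ξ (η - θ) = fip ξ η - fip ξ θ := by
  simp [fip, Matrix.mul_sub]

lemma fip_sub_left (ξ η θ : Mat n p) : fip (ξ - η) θ = fip ξ θ - fip η θ := by
  simp [fip, Matrix.sub_mul]

lemma fip_smul_right (c : ℝ) (ξ η : Mat n p) : fip ξ (c • η) = c * fip ξ η := by
  simp [fip, Matrix.mul_smul]

lemma fip_smul_left (c : ℝ) (ξ η : Mat n p) : fip (c • ξ) η = c * fip ξ η := by
  simp [fip, Matrix.smul_mul]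

lemma fip_self_nonneg (ξ : Mat n p) : 0 ≤ fip ξ ξ := by
  rw [fip_eq_sum]
  exact Finset.sum_nonneg fun i _ => Finset.sum_nonneg fun j _ => mul_self_nonneg _

lemma fnorm_sq (ξ : Mat n p) : fnorm ξ ^ 2 = fip ξ ξ :=
  Real.sq_sqrt (fip_self_nonneg ξ)

lemma fip_mul_transpose {k : ℕ} (a : Mat n p) (b : Matrix (Fin n) (Fin k) ℝ)
    (c : Matrix (Fin p) (Fin k) ℝ) : fip a (b * cᵀ) = fip (a * c) b := by
  unfold fip
  rw [← Matrix.mul_assoc, Matrix.trace_mul_comm, ← Matrix.mul_assoc, ← Matrix.transpose_mul,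
    Matrix.trace_mul_comm]

lemma selT_mul_sel (C : Finset (Fin p)) : (sel C)ᵀ * sel C = 1 := by
  ext a b
  simp only [Matrix.mul_apply, sel, Matrix.transpose_apply, Matrix.of_apply, Matrix.one_apply,
    ite_mul, one_mul, zero_mul]
  rw [Finset.sum_ite_eq' Finset.univ (C.orderEmbOfFin rfl a)]
  simp [(C.orderEmbOfFin rfl).injective.eq_iff]

lemma sel_mul_selT_apply (C : Finset (Fin p)) (s s' : Fin p) :
    (sel C * (sel C)ᵀ) s s' = if s = s' ∧ s ∈ C then 1 else 0 := by
  simp only [Matrix.mul_apply, sel, Matrix.transpose_apply, Matrix.of_apply]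
  by_cases hs : s ∈ C
  · obtain ⟨t0, ht0⟩ : ∃ t0, C.orderEmbOfFin rfl t0 = s := by
      have h := Finset.range_orderEmbOfFin C rfl
      have : s ∈ Set.range (C.orderEmbOfFin rfl) := by rw [h]; exact hs
      exact this
    rw [Finset.sum_eq_single t0]
    · simp [ht0.symm, hs, eq_comm]
    · intro t _ ht
      have : s ≠ C.orderEmbOfFin rfl t := fun h => ht ((C.orderEmbOfFin rfl).injective (by rw [← h, ht0]))
      simp [this]
    · simp
  · rw [Finset.sum_eq_zero, if_neg (by tauto)]
    intro t _
    have : s ≠ C.orderEmbOfFin rfl t := by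
      intro h; exact hs (h ▸ Finset.orderEmbOfFin_mem C rfl t)
    simp [this]

lemma sel_decomp (C : Finset (Fin p)) :
    sel C * (sel C)ᵀ + sel Cᶜ * (sel Cᶜ)ᵀ = (1 : Matrix (Fin p) (Fin p) ℝ) := by
  ext s s'
  simp only [Matrix.add_apply, sel_mul_selT_apply, Matrix.one_apply, Finset.mem_compl]
  by_cases h : s = s'
  · subst h; by_cases hc : s ∈ C <;> simp [hc]
  · simp [h]

lemma X_decomp (C : Finset (Fin p)) (X : Mat n p) :
    (X * sel C) * (sel C)ᵀ + (X * sel Cᶜ) * (sel Cᶜ)ᵀ = X := by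
  rw [Matrix.mul_assoc, Matrix.mul_assoc, ← Matrix.mul_add, sel_decomp, Matrix.mul_one]

lemma fip_selT_selT (C : Finset (Fin p))
    (η ξ : Matrix (Fin n) (Fin C.card) ℝ) :
    fip (η * (sel C)ᵀ) (ξ * (sel C)ᵀ) = fip η ξ := by
  rw [fip_mul_transpose, Matrix.mul_assoc, selT_mul_sel, Matrix.mul_one]

lemma fip_ext {a b : Mat n p} (h : ∀ η, fip a η = fip b η) : a = b := by
  ext i j
  have := h (Matrix.single i j 1)
  simpa [fip_eq_sum, Matrix.single, ite_and, Finset.sum_ite_eq, mul_ite] using this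



/-- Difference quotient. -/
def dq (g : Mat n p → ℝ) (X : Mat n p) (t : ℝ) (ξ : Mat n p) : ℝ := (g (X + t • ξ) - g X) / t

/-- Set of difference quotients along admissible step sizes. -/
def dS (Ω : Set (Mat n p)) (g : Mat n p → ℝ) (X : Mat n p) (ξ : Mat n p) : Set ℝ :=
  {r | ∃ t, 0 < t ∧ X + t • ξ ∈ Ω ∧ r = dq g X t ξ}

lemma exists_pos_smul_mem {Ω : Set (Mat n p)} (hΩo : IsOpen Ω) {X : Mat n p} (hX : X ∈ Ω)
    (ξ : Mat n p) : ∃ t : ℝ, 0 < t ∧ X + t • ξ ∈ Ω := by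
  have hc : Continuous fun t : ℝ => X + t • ξ := by continuity
  have hpre : IsOpen ((fun t : ℝ => X + t • ξ) ⁻¹' Ω) := hc.isOpen_preimage _ hΩo
  have h0 : (0 : ℝ) ∈ (fun t : ℝ => X + t • ξ) ⁻¹' Ω := by
    simp only [Set.mem_preimage, zero_smul, add_zero]; exact hX
  rcases Metric.isOpen_iff.mp hpre 0 h0 with ⟨ε, hε, hball⟩
  refine ⟨ε / 2, by linarith, ?_⟩
  have hb : (ε / 2 : ℝ) ∈ Metric.ball (0 : ℝ) ε := by
    rw [Metric.mem_ball, Real.dist_eq, sub_zero, abs_of_pos (by linarith)]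
    linarith
  exact hball hb

lemma dq_slope {Ω : Set (Mat n p)} {g : Mat n p → ℝ} (hg : ConvexOn ℝ Ω g)
    {X : Mat n p} (ξ : Mat n p) (t s : ℝ) (ht : 0 < t) (hs : 0 < s)
    (h1 : X + t • ξ ∈ Ω) (h2 : X + s • (-ξ) ∈ Ω) :
    (g X - g (X + s • (-ξ))) / s ≤ dq g X t ξ := by
  have hst : 0 < s + t := by linarith
  have ha : 0 ≤ s / (s + t) := by positivity
  have hb : 0 ≤ t / (s + t) := by positivity
  have hab : s / (s + t) + t / (s + t) = 1 := by field_simp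
  have hcv := hg.2 h1 h2 ha hb hab
  have hcomb : (s / (s + t)) • (X + t • ξ) + (t / (s + t)) • (X + s • (-ξ)) = X := by
    match_scalars <;> field_simp <;> ring
  rw [hcomb] at hcv
  simp only [smul_eq_mul] at hcv
  rw [dq, div_le_div_iff₀ hs ht]
  rw [div_mul_eq_mul_div, div_mul_eq_mul_div, ← add_div, le_div_iff₀ hst] at hcv
  nlinarith [hcv]

lemma dq_mono {Ω : Set (Mat n p)} {g : Mat n p → ℝ} (hg : ConvexOn ℝ Ω g)
    {X : Mat n p} (hX : X ∈ Ω) (ξ : Mat n p) (t t' : ℝ) (ht : 0 < t) (htt' : t ≤ t')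
    (h' : X + t' • ξ ∈ Ω) :
    X + t • ξ ∈ Ω ∧ dq g X t ξ ≤ dq g X t' ξ := by
  have ht' : 0 < t' := lt_of_lt_of_le ht htt'
  have ha : 0 ≤ 1 - t / t' := by
    rw [sub_nonneg]; exact (div_le_one ht').mpr htt'
  have hb : 0 ≤ t / t' := by positivity
  have hab : (1 - t / t') + t / t' = 1 := by ring
  have hcomb : (1 - t / t') • X + (t / t') • (X + t' • ξ) = X + t • ξ := by
    match_scalars <;> field_simp <;> ring
  have hmem : X + t • ξ ∈ Ω := by rw [← hcomb]; exact hg.1 hX h' ha hb hab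
  refine ⟨hmem, ?_⟩
  have hcv := hg.2 hX h' ha hb hab
  rw [hcomb] at hcv
  have h3 : g (X + t • ξ) - g X ≤ t / t' * (g (X + t' • ξ) - g X) := by
    simp only [smul_eq_mul] at hcv
    ring_nf at hcv ⊢
    linarith [hcv]
  rw [dq, dq, div_le_div_iff₀ ht ht']
  have h4 : (g (X + t • ξ) - g X) * t' ≤ (t / t' * (g (X + t' • ξ) - g X)) * t' :=
    mul_le_mul_of_nonneg_right h3 ht'.le
  calc (g (X + t • ξ) - g X) * t' ≤ (t / t' * (g (X + t' • ξ) - g X)) * t' := h4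
    _ = (g (X + t' • ξ) - g X) * (t / t' * t') := by ring
    _ = (g (X + t' • ξ) - g X) * t := by rw [div_mul_cancel₀ t ht'.ne']

lemma exists_subgradient_extension
    {Ω : Set (Mat n p)} (hΩo : IsOpen Ω)
    {g : Mat n p → ℝ} (hg : ConvexOn ℝ Ω g) {X : Mat n p} (hX : X ∈ Ω)
    (E : Submodule ℝ (Mat n p)) (w : Mat n p)
    (hslice : ∀ ξ ∈ E, X + ξ ∈ Ω → g X + fip w ξ ≤ g (X + ξ)) :
    ∃ v : Mat n p, (∀ ξ ∈ E, fip v ξ = fip w ξ) ∧ ∀ Y ∈ Ω, g X + fip v (Y - X) ≤ g Y := by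
  classical
  have hne : ∀ ξ : Mat n p, (dS Ω g X ξ).Nonempty := by
    intro ξ
    obtain ⟨t, ht, hm⟩ := exists_pos_smul_mem hΩo hX ξ
    exact ⟨dq g X t ξ, t, ht, hm, rfl⟩
  have hbdd : ∀ ξ : Mat n p, BddBelow (dS Ω g X ξ) := by
    intro ξ
    obtain ⟨s, hs, hm⟩ := exists_pos_smul_mem hΩo hX (-ξ)
    refine ⟨(g X - g (X + s • (-ξ))) / s, ?_⟩
    rintro r ⟨t, ht, hmt, rfl⟩
    exact dq_slope hg ξ t s ht hs hmt hm
  set N : Mat n p → ℝ := fun ξ => sInf (dS Ω g X ξ) with hN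
  have N_le : ∀ ξ (t : ℝ), 0 < t → X + t • ξ ∈ Ω → N ξ ≤ dq g X t ξ := by
    intro ξ t ht hm
    exact csInf_le (hbdd ξ) ⟨t, ht, hm, rfl⟩
  have N_ge : ∀ ξ (b : ℝ), (∀ t : ℝ, 0 < t → X + t • ξ ∈ Ω → b ≤ dq g X t ξ) → b ≤ N ξ := by
    intro ξ b hb
    exact le_csInf (hne ξ) (by rintro r ⟨t, ht, hm, rfl⟩; exact hb t ht hm)
  have N_hom : ∀ c : ℝ, 0 < c → ∀ ξ, N (c • ξ) = c * N ξ := by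
    intro c hc ξ
    have hset : dS Ω g X (c • ξ) = c • dS Ω g X ξ := by
      ext r
      constructor
      · rintro ⟨t, ht, hm, rfl⟩
        have hmm : X + (t * c) • ξ ∈ Ω := by rw [mul_smul]; exact hm
        refine ⟨dq g X (t * c) ξ, ⟨t * c, by positivity, hmm, rfl⟩, ?_⟩
        show c • dq g X (t * c) ξ = dq g X t (c • ξ)
        rw [dq, dq, smul_smul, mul_comm t c, smul_eq_mul]
        have ht' := ht.ne'
        have hc' := hc.ne'
        field_simp
      · rintro ⟨r', ⟨s, hs, hm, rfl⟩, rfl⟩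
        refine ⟨s / c, by positivity, ?_, ?_⟩
        · rw [smul_smul, div_mul_cancel₀ s hc.ne']; exact hm
        · show c • dq g X s ξ = dq g X (s / c) (c • ξ)
          rw [dq, dq, smul_smul, div_mul_cancel₀ s hc.ne', smul_eq_mul]
          have hs' := hs.ne'
          have hc' := hc.ne'
          field_simp
    rw [hN]
    simp only
    rw [hset, Real.sInf_smul_of_nonneg hc.le, smul_eq_mul]
  have N_add : ∀ ξ η, N (ξ + η) ≤ N ξ + N η := by
    intro ξ η
    have key : ∀ r₁ ∈ dS Ω g X ξ, ∀ r₂ ∈ dS Ω g X η, N (ξ + η) ≤ r₁ + r₂ := by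
      rintro r₁ ⟨t₁, ht₁, hm₁, rfl⟩ r₂ ⟨t₂, ht₂, hm₂, rfl⟩
      set t := min t₁ t₂ with hts
      have ht : 0 < t := lt_min ht₁ ht₂
      obtain ⟨hmξ, hq₁⟩ := dq_mono hg hX ξ t t₁ ht (min_le_left _ _) hm₁
      obtain ⟨hmη, hq₂⟩ := dq_mono hg hX η t t₂ ht (min_le_right _ _) hm₂
      have hmid : X + (t / 2) • (ξ + η) = (1/2 : ℝ) • (X + t • ξ) + (1/2 : ℝ) • (X + t • η) := by
        match_scalars <;> ring
      have hmm : X + (t / 2) • (ξ + η) ∈ Ω := by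
        rw [hmid]
        exact hg.1 hmξ hmη (by norm_num) (by norm_num) (by norm_num)
      have hcv := hg.2 hmξ hmη (by norm_num : (0:ℝ) ≤ 1/2) (by norm_num : (0:ℝ) ≤ 1/2) (by norm_num)
      rw [← hmid] at hcv
      have hq3 : dq g X (t / 2) (ξ + η) ≤ dq g X t ξ + dq g X t η := by
        rw [dq, dq, dq, ← add_div, div_le_div_iff₀ (by linarith) ht]
        simp only [smul_eq_mul] at hcv
        nlinarith [mul_le_mul_of_nonneg_right hcv ht.le]
      calc N (ξ + η) ≤ dq g X (t / 2) (ξ + η) := N_le _ _ (by linarith) hmm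
        _ ≤ dq g X t ξ + dq g X t η := hq3
        _ ≤ dq g X t₁ ξ + dq g X t₂ η := add_le_add hq₁ hq₂
    have h1 : ∀ r₁ ∈ dS Ω g X ξ, N (ξ + η) - r₁ ≤ N η := by
      intro r₁ h₁
      refine le_csInf (hne η) ?_
      intro r₂ h₂
      linarith [key r₁ h₁ r₂ h₂]
    have h2 : N (ξ + η) - N η ≤ N ξ := by
      refine le_csInf (hne ξ) ?_
      intro r₁ h₁
      linarith [h1 r₁ h₁]
    linarith
  -- the linear functional on E
  set l : Mat n p →ₗ[ℝ] ℝ :=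
    { toFun := fun η => fip w η
      map_add' := fun a b => fip_add_right w a b
      map_smul' := fun c a => fip_smul_right c w a } with hl
  set F : (Mat n p) →ₗ.[ℝ] ℝ := ⟨E, l.comp E.subtype⟩ with hF
  have hf : ∀ x : F.domain, F x ≤ N x := by
    rintro ⟨x, hx⟩
    show fip w x ≤ N x
    refine N_ge x _ ?_
    intro t ht hm
    have hs := hslice (t • x) (E.smul_mem t hx) hm
    rw [fip_smul_right] at hs
    rw [dq, le_div_iff₀ ht]
    linarith
  obtain ⟨ψ, hψeq, hψle⟩ := exists_extension_of_le_sublinear F N N_hom N_add hf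
  set v : Mat n p := Matrix.of fun i j => ψ (Matrix.single i j 1) with hv
  have hvψ : ∀ η : Mat n p, fip v η = ψ η := by
    intro η
    conv_rhs => rw [Matrix.matrix_eq_sum_single η]
    rw [map_sum]
    rw [fip_eq_sum]
    refine Finset.sum_congr rfl fun i _ => ?_
    rw [map_sum]
    refine Finset.sum_congr rfl fun j _ => ?_
    have : Matrix.single i j (η i j) = (η i j) • Matrix.single i j 1 := by
      rw [Matrix.smul_single, smul_eq_mul, mul_one]
    rw [this, LinearMap.map_smul, smul_eq_mul]
    simp only [hv, Matrix.of_apply]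
    ring
  refine ⟨v, ?_, ?_⟩
  · intro ξ hξ
    have h := hψeq ⟨ξ, hξ⟩
    rw [hvψ]
    exact h
  · intro Y hY
    have hmem : g Y - g X ∈ dS Ω g X (Y - X) := by
      refine ⟨1, one_pos, ?_, ?_⟩
      · rw [one_smul, add_sub_cancel]; exact hY
      · rw [dq, one_smul, add_sub_cancel, div_one]
    have h1 : ψ (Y - X) ≤ N (Y - X) := hψle _
    have h2 : N (Y - X) ≤ g Y - g X := csInf_le (hbdd _) hmem
    have h3 := hvψ (Y - X)
    linarith



lemma fip_expand (a b : Mat n p) :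
    fip b b = fip a a + 2 * fip a (b - a) + fip (b - a) (b - a) := by
  simp only [fip_sub_left, fip_sub_right, fip_comm b a]
  ring

/-- Proposition 3.3: relationship between partial and full
Euclidean subdifferentials. -/
theorem partial_subdifferential_eq_image
    (n p : ℕ) (Ω : Set (Mat n p)) (hΩopen : IsOpen Ω) (hΩconv : Convex ℝ Ω)
    (τ : ℝ) (f : Mat n p → ℝ)
    (hwc : ConvexOn ℝ Ω (fun Z => f Z + τ / 2 * (fnorm Z) ^ 2))
    (X : Mat n p) (hXΩ : X ∈ Ω) (C : Finset (Fin p)) :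
    {u : Matrix (Fin n) (Fin C.card) ℝ |
        ∀ YC : Matrix (Fin n) (Fin C.card) ℝ,
          YC * (sel C)ᵀ + (X * sel Cᶜ) * (sel Cᶜ)ᵀ ∈ Ω →
          f (YC * (sel C)ᵀ + (X * sel Cᶜ) * (sel Cᶜ)ᵀ)
            ≥ f X + fip u (YC - X * sel C) - τ / 2 * (fnorm (YC - X * sel C)) ^ 2}
      = (fun v => v * sel C) '' subdiff Ω τ f X := by
  apply Set.Subset.antisymm
  · -- hard direction
    intro u hu
    set w : Mat n p := (u + τ • (X * sel C)) * (sel C)ᵀ with hw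
    set ρ : Matrix (Fin n) (Fin C.card) ℝ →ₗ[ℝ] Mat n p :=
      { toFun := fun η => η * (sel C)ᵀ
        map_add' := fun a b => Matrix.add_mul a b (sel C)ᵀ
        map_smul' := fun c a => Matrix.smul_mul c a (sel C)ᵀ } with hρ
    have fipw : ∀ η : Matrix (Fin n) (Fin C.card) ℝ,
        fip w (η * (sel C)ᵀ) = fip u η + τ * fip (X * sel C) η := by
      intro η
      rw [hw, fip_selT_selT, fip_add_left, fip_smul_left]
    have hslice : ∀ ξ ∈ LinearMap.range ρ, X + ξ ∈ Ω →
        (fun Z => f Z + τ / 2 * (fnorm Z) ^ 2) X + fip w ξ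
          ≤ (fun Z => f Z + τ / 2 * (fnorm Z) ^ 2) (X + ξ) := by
      rintro ξ ⟨η, rfl⟩ hmem
      have hrew : (X * sel C + η) * (sel C)ᵀ + (X * sel Cᶜ) * (sel Cᶜ)ᵀ
          = X + ρ η := by
        show (X * sel C + η) * (sel C)ᵀ + (X * sel Cᶜ) * (sel Cᶜ)ᵀ = X + η * (sel C)ᵀ
        rw [Matrix.add_mul]
        conv_rhs => rw [← X_decomp C X]
        abel
      have hu' := hu (X * sel C + η) (by rw [hrew]; exact hmem)
      rw [hrew, add_sub_cancel_left] at hu'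
      have hρη : ρ η = η * (sel C)ᵀ := rfl
      simp only [hρη] at *
      simp only [fnorm_sq] at hu' ⊢
      rw [fipw η]
      have e1 : fip (X + η * (sel C)ᵀ) (X + η * (sel C)ᵀ)
          = fip X X + 2 * fip (X * sel C) η + fip η η := by
        rw [fip_add_left, fip_add_right, fip_add_right, fip_selT_selT,
          fip_comm (η * (sel C)ᵀ) X, fip_mul_transpose]
        ring
      rw [e1]
      linarith
    obtain ⟨v, hvE, hvsub⟩ := exists_subgradient_extension hΩopen hwc hXΩ
      (LinearMap.range ρ) w hslice
    refine ⟨v - τ • X, ?_, ?_⟩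
    · intro Y hY
      have h := hvsub Y hY
      simp only [fnorm_sq] at *
      have e2 := fip_expand X Y
      rw [e2] at h
      rw [fip_sub_left, fip_smul_left]
      linarith
    · apply fip_ext
      intro η
      have h1 : fip ((v - τ • X) * sel C) η = fip (v - τ • X) (η * (sel C)ᵀ) :=
        (fip_mul_transpose _ _ _).symm
      have h2 : fip v (η * (sel C)ᵀ) = fip w (η * (sel C)ᵀ) :=
        hvE (η * (sel C)ᵀ) ⟨η, rfl⟩
      rw [h1, fip_sub_left, fip_smul_left, h2, fipw η, fip_mul_transpose]
      ring
  · -- easy direction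
    rintro u ⟨v, hv, rfl⟩
    intro YC hYC
    have h := hv _ hYC
    have hYX : YC * (sel C)ᵀ + (X * sel Cᶜ) * (sel Cᶜ)ᵀ - X
        = (YC - X * sel C) * (sel C)ᵀ := by
      calc YC * (sel C)ᵀ + (X * sel Cᶜ) * (sel Cᶜ)ᵀ - X
          = YC * (sel C)ᵀ + (X * sel Cᶜ) * (sel Cᶜ)ᵀ
            - ((X * sel C) * (sel C)ᵀ + (X * sel Cᶜ) * (sel Cᶜ)ᵀ) := by rw [X_decomp]
        _ = (YC - X * sel C) * (sel C)ᵀ := by rw [Matrix.sub_mul]; abel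
    rw [hYX] at h
    have e1 : fip v ((YC - X * sel C) * (sel C)ᵀ) = fip (v * sel C) (YC - X * sel C) :=
      fip_mul_transpose v (YC - X * sel C) (sel C)
    have e2 : fnorm ((YC - X * sel C) * (sel C)ᵀ) ^ 2 = fnorm (YC - X * sel C) ^ 2 := by
      rw [fnorm_sq, fnorm_sq, fip_selT_selT]
    rw [e1, e2] at h
    exact h


end RSSM
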